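/- arXiv:1112.1236 — 3 statements merged into one kernel-verified Lean document; each statement's English description precedes it below -/
import Mathlib

section
/- Let D be an integral domain, S ⊆ D a multiplicative set, * a star operation on D and ♯ a star operation on the fraction ring D_S, such that I* ⊆ (I·D_S)^♯ for each nonzero ideal I of D. If D is *-sharp, then D_S is ♯-sharp. -/
open scoped nonZeroDivisors

/-- A star operation on an integral domain `D` with quotient field `K`: a map
`I ↦ I*` on (nonzero) fractional ideals such that `D* = D`, `(aI)* = a·I*`,
`I ⊆ I*`, `I ⊆ J → I* ⊆ J*` and `(I*)* = I*`. (The value at `0` is irrelevant.) -/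
structure StarOperation (D K : Type*) [CommRing D] [IsDomain D] [Field K]
    [Algebra D K] [IsFractionRing D K] where
  star : FractionalIdeal D⁰ K → FractionalIdeal D⁰ K
  star_one : star 1 = 1
  star_smul : ∀ (a : K), a ≠ 0 → ∀ I : FractionalIdeal D⁰ K, I ≠ 0 →
    star (FractionalIdeal.spanSingleton D⁰ a * I) = FractionalIdeal.spanSingleton D⁰ a * star I
  le_star : ∀ I : FractionalIdeal D⁰ K, I ≠ 0 → I ≤ star I
  star_mono : ∀ I J : FractionalIdeal D⁰ K, I ≠ 0 → J ≠ 0 → I ≤ J → star I ≤ star J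
  star_star : ∀ I : FractionalIdeal D⁰ K, I ≠ 0 → star (star I) = star I

section StarSharpDefs

variable {D K : Type*} [CommRing D] [IsDomain D] [Field K] [Algebra D K] [IsFractionRing D K]

/-- `D` is sharp with respect to the operation `star` ("`*`-sharp"): whenever
`I ⊇ A·B` for nonzero ideals `I, A, B` of `D`, there exist nonzero ideals `H, J`
with `I* = (HJ)*`, `H* ⊇ A` and `J* ⊇ B`. -/
def IsSharpOp (star : FractionalIdeal D⁰ K → FractionalIdeal D⁰ K) : Prop :=
  ∀ I A B : Ideal D, I ≠ 0 → A ≠ 0 → B ≠ 0 → A * B ≤ I →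
    ∃ H J : Ideal D, H ≠ 0 ∧ J ≠ 0 ∧
      star (I : FractionalIdeal D⁰ K) =
        star ((H : FractionalIdeal D⁰ K) * (J : FractionalIdeal D⁰ K)) ∧
      (A : FractionalIdeal D⁰ K) ≤ star (H : FractionalIdeal D⁰ K) ∧
      (B : FractionalIdeal D⁰ K) ≤ star (J : FractionalIdeal D⁰ K)

/-- `D` is `*`-sharp for the star operation `s`. -/
def StarOperation.IsSharp (s : StarOperation D K) : Prop :=
  IsSharpOp s.star

end StarSharpDefs

/-!
Contract `I`, `A`, `B` to `D`, apply `*`-sharpness of `D` there, and extend the resulting `H`, `J`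
back to `D_S`. Every ideal of `D_S` is the extension of its contraction, and the compatibility
`C* ⊆ (C D_S)^♯` turns `C₁ ⊆ C₂*` into `C₁ D_S ⊆ (C₂ D_S)^♯`, hence `C₁* = C₂*` into
`(C₁ D_S)^♯ = (C₂ D_S)^♯`.
-/

namespace StarOperation

variable {D K : Type*} [CommRing D] [IsDomain D] [Field K] [Algebra D K] [IsFractionRing D K]
  (s : StarOperation D K)

theorem star_ne_zero {I : FractionalIdeal D⁰ K} (hI : I ≠ 0) : s.star I ≠ 0 :=
  fun h => hI <| FractionalIdeal.le_zero_iff.mp <| h ▸ s.le_star I hI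

theorem star_le_star_of_le_star {I J : FractionalIdeal D⁰ K} (hI : I ≠ 0) (hJ : J ≠ 0)
    (h : I ≤ s.star J) : s.star I ≤ s.star J :=
  s.star_star J hJ ▸ s.star_mono I (s.star J) hI (s.star_ne_zero hJ) h

end StarOperation

theorem IsFractionRing.algebraMap_injective_of_tower (D E K : Type*) [CommRing D] [CommRing E]
    [Field K] [Algebra D E] [Algebra E K] [Algebra D K] [IsScalarTower D E K]
    [IsFractionRing D K] : Function.Injective (algebraMap D E) := by
  have h := IsFractionRing.injective D K
  rw [IsScalarTower.algebraMap_eq D E K, RingHom.coe_comp] at h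
  exact h.of_comp

theorem IsFractionRing.map_ne_zero_of_tower {D E : Type*} (K : Type*) [CommRing D] [CommRing E]
    [Field K] [Algebra D E] [Algebra E K] [Algebra D K] [IsScalarTower D E K]
    [IsFractionRing D K] {C : Ideal D} (hC : C ≠ 0) : C.map (algebraMap D E) ≠ 0 :=
  (Ideal.map_eq_bot_iff_of_injective (algebraMap_injective_of_tower D E K)).not.mpr hC

theorem FractionalIdeal.coeIdeal_map_le {D E K : Type*} [CommRing D] [CommRing E] [CommRing K]
    [Algebra D E] [Algebra E K] [Algebra D K] [IsScalarTower D E K] {C : Ideal D}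
    {M : FractionalIdeal E⁰ K} (h : ∀ x ∈ C, algebraMap D K x ∈ M) :
    ((C.map (algebraMap D E) : Ideal E) : FractionalIdeal E⁰ K) ≤ M := by
  have hmap : C.map (algebraMap D E) ≤ (M : Submodule E K).comap (Algebra.linearMap E K) := by
    refine Ideal.map_le_iff_le_comap.mpr fun x hx => ?_
    simpa [IsScalarTower.algebraMap_apply D E K] using h x hx
  rintro _ ⟨y, hy, rfl⟩
  exact hmap hy

theorem IsLocalization.comap_ne_zero {R : Type*} [CommRing R] (S : Submonoid R)
    (A : Type*) [CommRing A] [Algebra R A] [IsLocalization S A] {C : Ideal A} (hC : C ≠ 0) :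
    C.comap (algebraMap R A) ≠ 0 := fun h =>
  hC (by rw [← IsLocalization.map_under S A C, Ideal.under, h]; exact Ideal.map_bot)

namespace StarOperation

variable {D K E : Type*} [CommRing D] [IsDomain D] [Field K] [Algebra D K] [IsFractionRing D K]
  [CommRing E] [IsDomain E] [Algebra D E] [Algebra E K] [IsScalarTower D E K] [IsFractionRing E K]
  (s : StarOperation D K) (sh : StarOperation E K)
  (hcomp : ∀ I : Ideal D, I ≠ 0 → (s.star I : Set K) ⊆ sh.star (I.map (algebraMap D E) : Ideal E))
include hcomp

theorem coeIdeal_map_le_star_map {C₁ C₂ : Ideal D} (hC₂ : C₂ ≠ 0)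
    (h : (C₁ : FractionalIdeal D⁰ K) ≤ s.star C₂) :
    ((C₁.map (algebraMap D E) : Ideal E) : FractionalIdeal E⁰ K) ≤
      sh.star (C₂.map (algebraMap D E) : Ideal E) :=
  FractionalIdeal.coeIdeal_map_le fun _ hx =>
    hcomp C₂ hC₂ (h (FractionalIdeal.mem_coeIdeal_of_mem _ hx))

theorem star_map_le_star_map {C₁ C₂ : Ideal D} (hC₁ : C₁ ≠ 0) (hC₂ : C₂ ≠ 0)
    (h : s.star (C₁ : FractionalIdeal D⁰ K) ≤ s.star C₂) :
    sh.star ((C₁.map (algebraMap D E) : Ideal E) : FractionalIdeal E⁰ K) ≤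
      sh.star (C₂.map (algebraMap D E) : Ideal E) := by
  have coe_map_ne_zero {C : Ideal D} (hC : C ≠ 0) :
      ((C.map (algebraMap D E) : Ideal E) : FractionalIdeal E⁰ K) ≠ 0 :=
    FractionalIdeal.coeIdeal_ne_zero.mpr (IsFractionRing.map_ne_zero_of_tower K hC)
  have hC₁_le : (C₁ : FractionalIdeal D⁰ K) ≤ s.star C₂ :=
    (s.le_star _ (FractionalIdeal.coeIdeal_ne_zero.mpr hC₁)).trans h
  exact sh.star_le_star_of_le_star (coe_map_ne_zero hC₁) (coe_map_ne_zero hC₂)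
    (coeIdeal_map_le_star_map s sh hcomp hC₂ hC₁_le)

theorem star_map_eq_star_map {C₁ C₂ : Ideal D} (hC₁ : C₁ ≠ 0) (hC₂ : C₂ ≠ 0)
    (h : s.star (C₁ : FractionalIdeal D⁰ K) = s.star C₂) :
    sh.star ((C₁.map (algebraMap D E) : Ideal E) : FractionalIdeal E⁰ K) =
      sh.star (C₂.map (algebraMap D E) : Ideal E) :=
  le_antisymm (star_map_le_star_map s sh hcomp hC₁ hC₂ h.le)
    (star_map_le_star_map s sh hcomp hC₂ hC₁ h.ge)

end StarOperation

theorem statement0_general (D : Type*) [CommRing D] [IsDomain D]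
    (K : Type*) [Field K] [Algebra D K] [IsFractionRing D K]
    (S : Submonoid D)
    (E : Type*) [CommRing E] [IsDomain E] [Algebra D E] [IsLocalization S E]
    [Algebra E K] [IsScalarTower D E K] [IsFractionRing E K]
    (s : StarOperation D K) (sh : StarOperation E K)
    (hcomp : ∀ I : Ideal D, I ≠ 0 → ∀ x : K,
      x ∈ s.star (I : FractionalIdeal D⁰ K) →
      x ∈ sh.star ((I.map (algebraMap D E) : Ideal E) : FractionalIdeal E⁰ K))
    (hD : s.IsSharp) :
    sh.IsSharp := by
  intro I A B hI hA hB hAB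
  set f := algebraMap D E
  have hprod : A.comap f * B.comap f ≤ I.comap f :=
    Ideal.le_comap_mul f |>.trans (Ideal.comap_mono hAB)
  obtain ⟨H, J, hH, hJ, hstar, hAH, hBJ⟩ := hD _ _ _ (IsLocalization.comap_ne_zero S E hI)
    (IsLocalization.comap_ne_zero S E hA) (IsLocalization.comap_ne_zero S E hB) hprod
  refine ⟨H.map f, J.map f, IsFractionRing.map_ne_zero_of_tower K hH,
    IsFractionRing.map_ne_zero_of_tower K hJ, ?_, ?_, ?_⟩
  · rw [← IsLocalization.map_under S E I, ← FractionalIdeal.coeIdeal_mul, ← Ideal.map_mul]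
    rw [← FractionalIdeal.coeIdeal_mul] at hstar
    exact s.star_map_eq_star_map sh hcomp (IsLocalization.comap_ne_zero S E hI)
      (mul_ne_zero hH hJ) hstar
  · rw [← IsLocalization.map_under S E A]
    exact s.coeIdeal_map_le_star_map sh hcomp hH hAH
  · rw [← IsLocalization.map_under S E B]
    exact s.coeIdeal_map_le_star_map sh hcomp hJ hBJ

/-- Let `D` be an integral domain, `S ⊆ D` a multiplicative set,
`*` a star operation on `D` and `♯` a star operation on the fraction ring `D_S = E`,
such that `I* ⊆ (I·D_S)^♯` for each nonzero ideal `I` of `D`. If `D` is `*`-sharp,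
then `D_S` is `♯`-sharp. -/
theorem statement0 (D : Type*) [CommRing D] [IsDomain D]
    (K : Type*) [Field K] [Algebra D K] [IsFractionRing D K]
    (S : Submonoid D) (hS : S ≤ D⁰)
    (E : Type*) [CommRing E] [IsDomain E] [Algebra D E] [IsLocalization S E]
    [Algebra E K] [IsScalarTower D E K] [IsFractionRing E K]
    (s : StarOperation D K) (sh : StarOperation E K)
    (hcomp : ∀ I : Ideal D, I ≠ 0 → ∀ x : K,
      x ∈ s.star (I : FractionalIdeal D⁰ K) →
      x ∈ sh.star ((I.map (algebraMap D E) : Ideal E) : FractionalIdeal E⁰ K))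
    (hD : s.IsSharp) :
    sh.IsSharp :=
  statement0_general D K S E s sh hcomp hD
end

section
/- Let D be an integral domain and * a star operation on D. If D is *-Dedekind, then D is *-sharp. In particular, every Krull domain is t-sharp. -/
/-!
For a star operation `*`, sharpness follows as soon as `(X N N⁻¹)* = X*` for all nonzero
ideals `N`: given `I ⊇ AB`, take `H = A + I` and `J = I H⁻¹ ⊆ D`; then `(HJ)* = (I H H⁻¹)* = I*`,
and `BH ⊆ I` gives `B ⊆ (B H H⁻¹)* ⊆ J*`. If `D` is `*`-Dedekind this is immediate from
`(X (NN⁻¹)*)* = (X NN⁻¹)*`. For a Krull domain and `t`, two facts give it: `D` is completely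
integrally closed (each `D_P` is a DVR), whence `(NN⁻¹)⁻¹ = D`; and since a nonzero element lies in
only finitely many height one primes, `NN⁻¹` contains a finitely generated `G` with `G⁻¹ = D`,
which is what the finite character of `t` needs.
-/

open scoped nonZeroDivisors

/-- `P` is a height one prime of `R`. -/
def IsHeightOnePrime {R : Type*} [CommRing R] (P : Ideal R) : Prop :=
  P.IsPrime ∧ P ≠ ⊥ ∧ ∀ Q : Ideal R, Q.IsPrime → Q < P → Q = ⊥

/-- `R` is a Krull domain: the localizations of `R` at the height one primes are
discrete valuation rings, `R` is the intersection of these localizations inside its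
quotient field, and every nonzero element of `R` lies in only finitely many height
one primes. -/
def IsKrullDomain (R : Type*) [CommRing R] [IsDomain R] : Prop :=
  (∀ P : Ideal R, IsHeightOnePrime P → ∃ _ : P.IsPrime,
      ∃ _ : IsDomain (Localization.AtPrime P), IsDiscreteValuationRing (Localization.AtPrime P)) ∧
  (∀ x : FractionRing R,
      (∀ P : Ideal R, IsHeightOnePrime P →
        ∃ s : R, s ∉ P ∧ ∃ a : R,
          algebraMap R (FractionRing R) a = algebraMap R (FractionRing R) s * x) →
      ∃ d : R, algebraMap R (FractionRing R) d = x) ∧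
  (∀ x : R, x ≠ 0 → {P : Ideal R | IsHeightOnePrime P ∧ x ∈ P}.Finite)

section StarSharpDefs

variable {D K : Type*} [CommRing D] [IsDomain D] [Field K] [Algebra D K] [IsFractionRing D K]

/-- `D` is `*`-Dedekind if every nonzero fractional ideal `I` is `*`-invertible,
i.e. `(I·I⁻¹)* = D`. -/
def StarOperation.IsStarDedekind (s : StarOperation D K) : Prop :=
  ∀ I : FractionalIdeal D⁰ K, I ≠ 0 → s.star (I * I⁻¹) = 1

lemma inv_ne_zero' {I : FractionalIdeal D⁰ K} (hI : I ≠ 0) : I⁻¹ ≠ 0 := by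
  obtain ⟨d, hd, hdI⟩ := I.isFractional
  have hmem : algebraMap D K d ∈ I⁻¹ := by
    rw [FractionalIdeal.mem_inv_iff hI]
    intro y hy
    obtain ⟨c, hc⟩ := hdI y hy
    refine ⟨c, trivial, ?_⟩
    simpa [Algebra.smul_def] using hc
  intro h0
  rw [h0] at hmem
  have : algebraMap D K d ≠ 0 :=
    IsFractionRing.to_map_ne_zero_of_mem_nonZeroDivisors hd
  exact this (by simpa using hmem)

/-- The `v`-operation `I ↦ I_v = (I⁻¹)⁻¹`. -/
noncomputable def vOp (I : FractionalIdeal D⁰ K) : FractionalIdeal D⁰ K := (I⁻¹)⁻¹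

lemma vOp_mono {I J : FractionalIdeal D⁰ K} (h : I ≤ J) : vOp I ≤ vOp J := by
  rcases eq_or_ne I 0 with rfl | hI
  · show ((0 : FractionalIdeal D⁰ K)⁻¹)⁻¹ ≤ vOp J
    rw [FractionalIdeal.inv_zero', FractionalIdeal.inv_zero']
    exact FractionalIdeal.zero_le _
  have hJ : J ≠ 0 := fun hJ0 => hI (le_antisymm (hJ0 ▸ h) (FractionalIdeal.zero_le I))
  exact FractionalIdeal.inv_anti_mono (inv_ne_zero' hJ) (inv_ne_zero' hI)
    (FractionalIdeal.inv_anti_mono hI hJ h)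

/-- The `t`-operation: `I_t` is the union of `H_v` over the finitely generated
subideals `H` of `I`. -/
noncomputable def tOp (I : FractionalIdeal D⁰ K) : FractionalIdeal D⁰ K :=
  ⟨⨆ J : {J : FractionalIdeal D⁰ K // (J : Submodule D K).FG ∧ J ≤ I},
      ((vOp (J : FractionalIdeal D⁰ K) : FractionalIdeal D⁰ K) : Submodule D K),
    FractionalIdeal.isFractional_of_le (J := vOp I)
      (iSup_le fun J => FractionalIdeal.coe_le_coe.2 (vOp_mono J.2.2))⟩

end StarSharpDefs

/-- `R` is a `t`-sharp domain. -/
def IsTSharp (R : Type*) [CommRing R] [IsDomain R] : Prop :=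
  IsSharpOp (D := R) (K := FractionRing R) tOp

open FractionalIdeal

section FractionalIdeal

variable {D K : Type*} [CommRing D] [IsDomain D] [Field K] [Algebra D K] [IsFractionRing D K]

instance : NoZeroDivisors (FractionalIdeal D⁰ K) where
  eq_zero_or_eq_zero_of_mul_eq_zero {I J} h := by
    have hIJ : (I : Submodule D K) * J = ⊥ := by rw [← coe_mul, h, coe_zero]
    simpa only [coeToSubmodule_eq_bot] using Submodule.mul_eq_bot.1 hIJ

lemma FractionalIdeal.mul_inv_le_one (I : FractionalIdeal D⁰ K) : I * I⁻¹ ≤ 1 :=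
  mul_one_div_le_one

lemma FractionalIdeal.le_inv_inv {I : FractionalIdeal D⁰ K} (hI : I ≠ 0) : I ≤ I⁻¹⁻¹ :=
  (le_div_iff_mul_le (inv_ne_zero' hI)).2 I.mul_inv_le_one

lemma FractionalIdeal.exists_coeIdeal_eq_mul_inv {I H : Ideal D} (hIH : I ≤ H) :
    ∃ J : Ideal D, (J : FractionalIdeal D⁰ K) = I * (H : FractionalIdeal D⁰ K)⁻¹ :=
  le_one_iff_exists_coeIdeal.mp <|
    (mul_le_mul_left (coeIdeal_le_coeIdeal K |>.2 hIH) _).trans (mul_inv_le_one _)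

end FractionalIdeal

section Sharp

variable {D K : Type*} [CommRing D] [IsDomain D] [Field K] [Algebra D K] [IsFractionRing D K]

theorem isSharpOp_of_star_mul_mul_inv {star : FractionalIdeal D⁰ K → FractionalIdeal D⁰ K}
    (le_star : ∀ I : FractionalIdeal D⁰ K, I ≠ 0 → I ≤ star I)
    (star_mono : ∀ I J : FractionalIdeal D⁰ K, I ≠ 0 → J ≠ 0 → I ≤ J → star I ≤ star J)
    (star_mul_mul_inv : ∀ N : Ideal D, N ≠ ⊥ → ∀ X : FractionalIdeal D⁰ K, X ≠ 0 →
      star (X * (N * (N : FractionalIdeal D⁰ K)⁻¹)) = star X) :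
    IsSharpOp star := by
  intro I A B hI hA hB hAB
  have hH : A ⊔ I ≠ ⊥ := ne_bot_of_le_ne_bot hA le_sup_left
  set H : FractionalIdeal D⁰ K := ↑(A ⊔ I)
  have hH₀ : H ≠ 0 := coeIdeal_ne_zero.2 hH
  have hI₀ : (I : FractionalIdeal D⁰ K) ≠ 0 := coeIdeal_ne_zero.2 hI
  have hB₀ : (B : FractionalIdeal D⁰ K) ≠ 0 := coeIdeal_ne_zero.2 hB
  obtain ⟨J, hJ⟩ := exists_coeIdeal_eq_mul_inv (K := K) (le_sup_right : I ≤ A ⊔ I)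
  have hJ₀ : (J : FractionalIdeal D⁰ K) ≠ 0 := hJ ▸ mul_ne_zero hI₀ (inv_ne_zero' hH₀)
  have hBH : (B : FractionalIdeal D⁰ K) * H ≤ I := by
    rw [← coeIdeal_mul, coeIdeal_le_coeIdeal, Submodule.mul_sup, mul_comm B A]
    exact sup_le hAB Ideal.mul_le_right
  refine ⟨A ⊔ I, J, hH, coeIdeal_ne_zero.1 hJ₀, ?_, ?_, ?_⟩
  · rw [hJ, mul_left_comm, star_mul_mul_inv _ hH _ hI₀]
  · exact (coeIdeal_le_coeIdeal K |>.2 le_sup_left).trans (le_star _ hH₀)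
  · calc (B : FractionalIdeal D⁰ K)
        ≤ star (B * (H * H⁻¹)) := star_mul_mul_inv _ hH _ hB₀ ▸ le_star _ hB₀
      _ ≤ star J := by
        refine star_mono _ _ (mul_ne_zero hB₀ (mul_ne_zero hH₀ (inv_ne_zero' hH₀))) hJ₀ ?_
        rw [hJ, ← mul_assoc]
        exact mul_le_mul_left hBH _

end Sharp

namespace StarOperation

variable {D K : Type*} [CommRing D] [IsDomain D] [Field K] [Algebra D K] [IsFractionRing D K]
  (s : StarOperation D K)

lemma mul_star_le {X Y : FractionalIdeal D⁰ K} (hX : X ≠ 0) (hY : Y ≠ 0) :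
    X * s.star Y ≤ s.star (X * Y) := by
  refine mul_le.2 fun x hx y hy => ?_
  rcases eq_or_ne x 0 with rfl | hx₀
  · rw [zero_mul]; exact zero_mem _
  have hxY : spanSingleton D⁰ x * Y ≠ 0 :=
    mul_ne_zero (spanSingleton_ne_zero_iff.2 hx₀) hY
  have hxy : x * y ∈ s.star (spanSingleton D⁰ x * Y) := by
    rw [s.star_smul x hx₀ Y hY]
    exact mul_mem_mul (mem_spanSingleton_self D⁰ x) hy
  exact s.star_mono _ _ hxY (mul_ne_zero hX hY)
    (mul_le_mul_left (spanSingleton_le_iff_mem.2 hx) Y) hxy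

lemma star_mul_star {X Y : FractionalIdeal D⁰ K} (hX : X ≠ 0) (hY : Y ≠ 0) :
    s.star (X * s.star Y) = s.star (X * Y) := by
  have hXY : X * Y ≠ 0 := mul_ne_zero hX hY
  have hle : X * Y ≤ X * s.star Y := mul_le_mul_right (s.le_star Y hY) X
  refine le_antisymm ?_ (s.star_mono _ _ hXY (ne_bot_of_le_ne_bot hXY hle) hle)
  calc s.star (X * s.star Y)
      ≤ s.star (s.star (X * Y)) :=
        s.star_mono _ _ (ne_bot_of_le_ne_bot hXY hle)
          (ne_bot_of_le_ne_bot hXY (s.le_star _ hXY)) (s.mul_star_le hX hY)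
    _ = s.star (X * Y) := s.star_star _ hXY

theorem IsStarDedekind.isSharp {s : StarOperation D K} (hs : s.IsStarDedekind) : s.IsSharp :=
  isSharpOp_of_star_mul_mul_inv s.le_star s.star_mono fun N hN X hX => by
    replace hN : (N : FractionalIdeal D⁰ K) ≠ 0 := coeIdeal_ne_zero.2 hN
    rw [← s.star_mul_star hX (mul_ne_zero hN (inv_ne_zero' hN)), hs _ hN, mul_one]

end StarOperation

section TOperation

variable {D K : Type*} [CommRing D] [IsDomain D] [Field K] [Algebra D K] [IsFractionRing D K]

lemma vOp_le_tOp {I J : FractionalIdeal D⁰ K} (hJ : (J : Submodule D K).FG) (hJI : J ≤ I) :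
    vOp J ≤ tOp I :=
  coe_le_coe.1 <| le_iSup
    (fun J' : {J' : FractionalIdeal D⁰ K // (J' : Submodule D K).FG ∧ J' ≤ I} =>
      ((vOp J'.1 : FractionalIdeal D⁰ K) : Submodule D K)) ⟨J, hJ, hJI⟩

lemma tOp_le {I X : FractionalIdeal D⁰ K}
    (h : ∀ J : FractionalIdeal D⁰ K, (J : Submodule D K).FG → J ≤ I → vOp J ≤ X) :
    tOp I ≤ X :=
  coe_le_coe.1 <| iSup_le fun J => coe_le_coe.2 (h J.1 J.2.1 J.2.2)

lemma le_tOp (I : FractionalIdeal D⁰ K) : I ≤ tOp I := by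
  intro x hx
  rcases eq_or_ne x 0 with rfl | hx₀
  · exact zero_mem _
  have hfg : ((spanSingleton D⁰ x : FractionalIdeal D⁰ K) : Submodule D K).FG := by
    rw [coe_spanSingleton]
    exact Submodule.fg_span_singleton x
  exact vOp_le_tOp hfg (spanSingleton_le_iff_mem.2 hx)
    (le_inv_inv (spanSingleton_ne_zero_iff.2 hx₀) (mem_spanSingleton_self D⁰ x))

lemma tOp_mono {I J : FractionalIdeal D⁰ K} (h : I ≤ J) : tOp I ≤ tOp J :=
  tOp_le fun _ hfg hle => vOp_le_tOp hfg (hle.trans h)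

lemma vOp_le_vOp_mul {G : FractionalIdeal D⁰ K} (hG : G ≠ 0) (hG' : G⁻¹ ≤ 1)
    (J : FractionalIdeal D⁰ K) : vOp J ≤ vOp (J * G) := by
  rcases eq_or_ne J 0 with rfl | hJ
  · rw [zero_mul]
  have hJG : (J * G)⁻¹ * J ≤ G⁻¹ :=
    (le_div_iff_mul_le hG).2 <| by rw [mul_assoc, mul_comm]; exact mul_inv_le_one _
  exact inv_anti_mono (inv_ne_zero' (mul_ne_zero hJ hG)) (inv_ne_zero' hJ)
    ((le_div_iff_mul_le hJ).2 (hJG.trans hG'))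

/-- Finite character of `t`: every finitely generated `J ⊆ X` gives `JG ⊆ XM`, and
`J_v ⊆ (JG)_v` because `G_v = D`. -/
lemma tOp_mul_eq_of_fg_le {G M : FractionalIdeal D⁰ K} (hG : G ≠ 0)
    (hGfg : (G : Submodule D K).FG) (hG' : G⁻¹ ≤ 1) (hGM : G ≤ M) (hM : M ≤ 1)
    (X : FractionalIdeal D⁰ K) : tOp (X * M) = tOp X := by
  refine le_antisymm (tOp_mono (by simpa using mul_le_mul_right hM X)) (tOp_le fun J hJ hJX => ?_)
  have hJG : ((J * G : FractionalIdeal D⁰ K) : Submodule D K).FG := by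
    rw [coe_mul]; exact hJ.mul hGfg
  exact (vOp_le_vOp_mul hG hG' J).trans (vOp_le_tOp hJG (mul_le_mul' hJX hGM))

end TOperation

lemma IsAlmostIntegral.tower_top {R A S : Type*} [CommRing R] [CommRing A] [CommRing S]
    [Algebra R A] [Algebra A S] [Algebra R S] [IsScalarTower R A S]
    (hRA : R⁰ ≤ A⁰.comap (algebraMap R A)) {s : S} (hs : IsAlmostIntegral R s) :
    IsAlmostIntegral A s := by
  obtain ⟨r, hr, h⟩ := hs
  refine ⟨algebraMap R A r, hRA hr, fun n => ?_⟩
  obtain ⟨a, ha⟩ := h n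
  exact ⟨algebraMap R A a, by rw [← IsScalarTower.algebraMap_apply, ha, algebraMap_smul]⟩

lemma FractionalIdeal.isAlmostIntegral_of_mul_mem {D K : Type*} [CommRing D] [IsDomain D]
    [Field K] [Algebra D K] [IsFractionRing D K] {I : FractionalIdeal D⁰ K} (hI : I ≠ 0) {y : K}
    (hy : ∀ z ∈ I, y * z ∈ I) : IsAlmostIntegral D y := by
  obtain ⟨z, hz, hz₀⟩ : ∃ z ∈ I, z ≠ 0 := by
    by_contra! h
    exact hI (eq_zero_iff.2 h)
  have hpow : ∀ n : ℕ, y ^ n * z ∈ I := fun n => by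
    induction n with
    | zero => simpa using hz
    | succ n ih => rw [pow_succ', mul_assoc]; exact hy _ ih
  obtain ⟨d, hd, hdI⟩ := I.isFractional
  obtain ⟨r, hr⟩ := hdI z hz
  refine ⟨r, mem_nonZeroDivisors_of_ne_zero ?_, fun n => ?_⟩
  · rintro rfl
    rw [map_zero, eq_comm, Algebra.smul_def, mul_eq_zero] at hr
    exact hr.elim (IsFractionRing.to_map_ne_zero_of_mem_nonZeroDivisors hd) hz₀
  · obtain ⟨a, ha⟩ := hdI _ (hpow n)
    refine ⟨a, ?_⟩
    rw [ha, Algebra.smul_def, Algebra.smul_def, hr, Algebra.smul_def]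
    ring

lemma IsDiscreteValuationRing.exists_mem_forall_dvd {A : Type*} [CommRing A] [IsDomain A]
    [IsDiscreteValuationRing A] {S : Set A} (hS : S.Nonempty) : ∃ a ∈ S, ∀ b ∈ S, a ∣ b :=
  ⟨_, Function.argminOn_mem (addVal A) S hS,
    fun _ hb => addVal_le_iff_dvd.1 (Function.argminOn_le (addVal A) S hb)⟩

section Krull

variable {D : Type*} [CommRing D] [IsDomain D]

noncomputable abbrev localizationSubring (P : Ideal D) [P.IsPrime] : Subring (FractionRing D) :=
  (algebraMap (Localization.AtPrime P) (FractionRing D)).range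

lemma algebraMap_mem_localizationSubring (P : Ideal D) [P.IsPrime] (d : D) :
    algebraMap D (FractionRing D) d ∈ localizationSubring P :=
  ⟨algebraMap D _ d, (IsScalarTower.algebraMap_apply _ _ _ d).symm⟩

lemma inv_algebraMap_mem_localizationSubring {P : Ideal D} [P.IsPrime] {x : D} (hx : x ∉ P) :
    (algebraMap D (FractionRing D) x)⁻¹ ∈ localizationSubring P :=
  ⟨↑(IsLocalization.map_units (Localization.AtPrime P) (⟨x, hx⟩ : P.primeCompl)).unit⁻¹, by
    rw [map_units_inv, IsUnit.unit_spec, ← IsScalarTower.algebraMap_apply]⟩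

lemma exists_algebraMap_eq_mul_of_mem_localizationSubring {P : Ideal D} [P.IsPrime]
    {x : FractionRing D} (hx : x ∈ localizationSubring P) :
    ∃ s : D, s ∉ P ∧ ∃ a : D,
      algebraMap D (FractionRing D) a = algebraMap D (FractionRing D) s * x := by
  obtain ⟨t, rfl⟩ := hx
  obtain ⟨⟨a, s⟩, h⟩ := IsLocalization.surj P.primeCompl t
  refine ⟨s, s.2, a, ?_⟩
  rw [IsScalarTower.algebraMap_apply D (Localization.AtPrime P),
    IsScalarTower.algebraMap_apply D (Localization.AtPrime P) (FractionRing D) s, ← h, map_mul,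
    mul_comm]

lemma exists_mem_forall_eq_mul_mem_localizationSubring (P : Ideal D) [P.IsPrime]
    [IsDiscreteValuationRing (Localization.AtPrime P)] (X : Ideal D) :
    ∃ ξ₀ ∈ X, ∀ ξ ∈ X, ∃ c ∈ localizationSubring P,
      algebraMap D (FractionRing D) ξ = algebraMap D (FractionRing D) ξ₀ * c := by
  obtain ⟨_, ⟨ξ₀, hξ₀, rfl⟩, hdvd⟩ := IsDiscreteValuationRing.exists_mem_forall_dvd
    (⟨_, 0, X.zero_mem, rfl⟩ : (algebraMap D (Localization.AtPrime P) '' (X : Set D)).Nonempty)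
  refine ⟨ξ₀, hξ₀, fun ξ hξ => ?_⟩
  obtain ⟨t, ht⟩ := hdvd _ ⟨ξ, hξ, rfl⟩
  refine ⟨_, ⟨t, rfl⟩, ?_⟩
  rw [IsScalarTower.algebraMap_apply D (Localization.AtPrime P), ht, map_mul,
    ← IsScalarTower.algebraMap_apply]

namespace IsKrullDomain

variable (hK : IsKrullDomain D)
include hK

lemma isDiscreteValuationRing {P : Ideal D} [P.IsPrime] (hP : IsHeightOnePrime P) :
    IsDiscreteValuationRing (Localization.AtPrime P) := by
  obtain ⟨_, _, h⟩ := hK.1 P hP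
  exact h

lemma exists_algebraMap_eq_of_forall_mem {x : FractionRing D}
    (hx : ∀ (P : Ideal D) [P.IsPrime], IsHeightOnePrime P → x ∈ localizationSubring P) :
    ∃ d : D, algebraMap D (FractionRing D) d = x :=
  hK.2.1 x fun P hP => haveI := hP.1; exists_algebraMap_eq_mul_of_mem_localizationSubring (hx P hP)

lemma exists_algebraMap_eq_of_isAlmostIntegral {x : FractionRing D} (hx : IsAlmostIntegral D x) :
    ∃ d : D, algebraMap D (FractionRing D) d = x := by
  refine hK.exists_algebraMap_eq_of_forall_mem fun P _ hP => ?_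
  have := hK.isDiscreteValuationRing hP
  have hxP : IsAlmostIntegral (Localization.AtPrime P) x :=
    hx.tower_top (nonZeroDivisors_le_comap_nonZeroDivisors_of_injective _
      (IsLocalization.injective _ P.primeCompl_le_nonZeroDivisors))
  exact IsIntegrallyClosed.isIntegral_iff.1 (isAlmostIntegral_iff_isIntegral.1 hxP)

/-- Complete integral closedness: `y (I I⁻¹) ⊆ D` gives `y I⁻¹ ⊆ I⁻¹`. -/
lemma inv_mul_inv_le_one {I : FractionalIdeal D⁰ (FractionRing D)} (hI : I ≠ 0) :
    (I * I⁻¹)⁻¹ ≤ 1 := by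
  intro y hy
  rw [mem_inv_iff (mul_ne_zero hI (inv_ne_zero' hI))] at hy
  have hyI : ∀ z ∈ I⁻¹, y * z ∈ I⁻¹ := fun z hz =>
    (mem_inv_iff hI).2 fun w hw => by
      simpa only [mul_assoc, mul_comm z] using hy _ (mul_mem_mul hw hz)
  obtain ⟨d, hd⟩ := hK.exists_algebraMap_eq_of_isAlmostIntegral
    (isAlmostIntegral_of_mul_mem (inv_ne_zero' hI) hyI)
  exact (mem_one_iff _).2 ⟨d, hd⟩

lemma inv_le_inv_of_forall_exists_eq_mul {G X : Ideal D} (hX : X ≠ ⊥)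
    (hloc : ∀ (P : Ideal D) [P.IsPrime], IsHeightOnePrime P → ∃ g ∈ G, ∀ ξ ∈ X,
      ∃ c ∈ localizationSubring P,
        algebraMap D (FractionRing D) ξ = algebraMap D (FractionRing D) g * c) :
    (G : FractionalIdeal D⁰ (FractionRing D))⁻¹ ≤ (X : FractionalIdeal D⁰ (FractionRing D))⁻¹ := by
  rcases eq_or_ne G ⊥ with rfl | hG
  · rw [coeIdeal_bot, inv_zero']
    exact zero_le _
  intro y hy
  rw [mem_inv_iff (coeIdeal_ne_zero.2 hG)] at hy
  refine (mem_inv_iff (coeIdeal_ne_zero.2 hX)).2 fun _ hz => ?_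
  obtain ⟨ξ, hξ, rfl⟩ := (mem_coeIdeal _).1 hz
  refine (mem_one_iff _).2 (hK.exists_algebraMap_eq_of_forall_mem fun P _ hP => ?_)
  obtain ⟨g, hg, hgX⟩ := hloc P hP
  obtain ⟨c, hc, hξg⟩ := hgX ξ hξ
  obtain ⟨d, hd⟩ := (mem_one_iff _).1 (hy _ ((mem_coeIdeal _).2 ⟨g, hg, rfl⟩))
  rw [hξg, ← mul_assoc, ← hd]
  exact mul_mem (algebraMap_mem_localizationSubring P d) hc

/-- Pick `0 ≠ x ∈ X`; at the finitely many height one primes `P ∋ x` add a generator of `X D_P`,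
while at all other `P` the element `x` already generates `X D_P`. -/
theorem exists_fg_le_inv_le {X : Ideal D} (hX : X ≠ ⊥) :
    ∃ G : Ideal D, G ≤ X ∧ G ≠ ⊥ ∧ G.FG ∧
      (G : FractionalIdeal D⁰ (FractionRing D))⁻¹ ≤
        (X : FractionalIdeal D⁰ (FractionRing D))⁻¹ := by
  classical
  obtain ⟨x, hxX, hx₀⟩ := Submodule.exists_mem_ne_zero_of_ne_bot hX
  have hgen : ∀ P : Ideal D, ∃ ξ₀ ∈ X, ∀ (_ : P.IsPrime), IsHeightOnePrime P → ∀ ξ ∈ X,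
      ∃ c ∈ localizationSubring P,
        algebraMap D (FractionRing D) ξ = algebraMap D (FractionRing D) ξ₀ * c := by
    intro P
    by_cases hP : IsHeightOnePrime P
    · have := hP.1
      have := hK.isDiscreteValuationRing hP
      obtain ⟨ξ₀, hξ₀, h⟩ := exists_mem_forall_eq_mul_mem_localizationSubring P X
      exact ⟨ξ₀, hξ₀, fun _ _ => h⟩
    · exact ⟨x, hxX, fun _ h => absurd h hP⟩
  choose ξ₀ hξ₀X hξ₀ using hgen
  set G := Ideal.span (insert x (ξ₀ '' {P | IsHeightOnePrime P ∧ x ∈ P}))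
  have hxG : x ∈ G := Ideal.subset_span (Set.mem_insert x _)
  have hG : G ≠ ⊥ := fun h => hx₀ ((Submodule.mem_bot D).1 (h ▸ hxG))
  have hGX : G ≤ X :=
    Ideal.span_le.2 <| Set.insert_subset hxX <| Set.image_subset_iff.2 fun P _ => hξ₀X P
  refine ⟨G, hGX, hG, Submodule.fg_span (((hK.2.2 x hx₀).image ξ₀).insert x),
    hK.inv_le_inv_of_forall_exists_eq_mul hX fun P _ hP => ?_⟩
  by_cases hxP : x ∈ P
  · exact ⟨ξ₀ P, Ideal.subset_span (Set.mem_insert_of_mem _ ⟨P, ⟨hP, hxP⟩, rfl⟩),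
      hξ₀ P ‹_› hP⟩
  · refine ⟨x, hxG, fun ξ _ => ⟨_, mul_mem (inv_algebraMap_mem_localizationSubring hxP)
      (algebraMap_mem_localizationSubring P ξ), ?_⟩⟩
    rw [mul_inv_cancel_left₀]
    exact IsFractionRing.to_map_ne_zero_of_mem_nonZeroDivisors (mem_nonZeroDivisors_of_ne_zero hx₀)

theorem tOp_mul_eq_self {M : FractionalIdeal D⁰ (FractionRing D)} (hM₀ : M ≠ 0) (hM : M ≤ 1)
    (hM' : M⁻¹ ≤ 1) (X : FractionalIdeal D⁰ (FractionRing D)) : tOp (X * M) = tOp X := by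
  obtain ⟨N, rfl⟩ := le_one_iff_exists_coeIdeal.1 hM
  obtain ⟨G, hGN, hG, hGfg, hGinv⟩ := hK.exists_fg_le_inv_le (coeIdeal_ne_zero.1 hM₀)
  exact tOp_mul_eq_of_fg_le (coeIdeal_ne_zero.2 hG) (Submodule.FG.map _ hGfg) (hGinv.trans hM')
    ((coeIdeal_le_coeIdeal _).2 hGN) hM X

theorem isTSharp : IsTSharp D :=
  isSharpOp_of_star_mul_mul_inv (fun I _ => le_tOp I) (fun _ _ _ _ => tOp_mono) fun N hN X _ => by
    have hN₀ : (N : FractionalIdeal D⁰ (FractionRing D)) ≠ 0 := coeIdeal_ne_zero.2 hN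
    exact hK.tOp_mul_eq_self (mul_ne_zero hN₀ (inv_ne_zero' hN₀)) (mul_inv_le_one _)
      (hK.inv_mul_inv_le_one hN₀) X

end IsKrullDomain

end Krull

/-- If `*` is a star operation on `D` and `D` is `*`-Dedekind, then
`D` is `*`-sharp. In particular, every Krull domain is `t`-sharp. -/
theorem statement3 (D : Type*) [CommRing D] [IsDomain D]
    (K : Type*) [Field K] [Algebra D K] [IsFractionRing D K]
    (s : StarOperation D K) :
    (s.IsStarDedekind → s.IsSharp) ∧ (IsKrullDomain D → IsTSharp D) :=
  ⟨StarOperation.IsStarDedekind.isSharp, IsKrullDomain.isTSharp⟩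
end

section
/- Let D be an integral domain and * a star operation on D such that D is *-sharp. Then I_v is *-invertible for each nonzero ideal I of D. -/
open scoped nonZeroDivisors

/-!
Pick `0 ≠ a ∈ I`. Then `B := a I⁻¹` is an integral ideal with `I B ⊆ (a)`, so sharpness
gives `(a) = (HJ)*` with `I ⊆ H*` and `B ⊆ J*`. Pushing `H*` and `J*` through `(HJ)* = (a)`
yields `J ⊆ a I⁻¹` and `H I⁻¹ ⊆ D`, i.e. `H ⊆ I_v`. Hence `a⁻¹ H J ⊆ I_v I⁻¹ ⊆ D`, and
applying `*` gives `D = a⁻¹ (HJ)* ⊆ (I_v I⁻¹)* ⊆ D`; finally `I_v⁻¹ = I⁻¹`.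
-/

namespace FractionalIdeal

variable {D K : Type*} [CommRing D] [IsDomain D] [Field K] [Algebra D K] [IsFractionRing D K]

instance : NoZeroDivisors (FractionalIdeal D⁰ K) where
  eq_zero_or_eq_zero_of_mul_eq_zero {I J} hIJ := by
    by_contra! h
    obtain ⟨x, hx0, hxI⟩ := exists_ne_zero_mem_isInteger h.1
    obtain ⟨y, hy0, hyJ⟩ := exists_ne_zero_mem_isInteger h.2
    have hxy : algebraMap D K x * algebraMap D K y ∈ I * J := mul_mem_mul hxI hyJ
    rw [hIJ, mem_zero_iff, ← map_mul, IsFractionRing.to_map_eq_zero_iff] at hxy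
    exact mul_ne_zero hx0 hy0 hxy

theorem mul_inv_le_one_s4 (I : FractionalIdeal D⁰ K) : I * I⁻¹ ≤ 1 :=
  mul_one_div_le_one

theorem le_inv_iff_mul_le {I J : FractionalIdeal D⁰ K} (hI : I ≠ 0) : J ≤ I⁻¹ ↔ J * I ≤ 1 :=
  le_div_iff_mul_le hI

theorem isUnit_spanSingleton {x : K} (hx : x ≠ 0) : IsUnit (spanSingleton D⁰ x) :=
  IsUnit.of_mul_eq_one _ (spanSingleton_mul_inv K hx)

theorem le_spanSingleton_mul_iff_inv_mul_le {x : K} (hx : x ≠ 0) {I J : FractionalIdeal D⁰ K} :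
    I ≤ spanSingleton D⁰ x * J ↔ spanSingleton D⁰ x⁻¹ * I ≤ J := by
  rw [← (isUnit_spanSingleton (inv_ne_zero hx)).mul_le_mul_left, ← mul_assoc,
    spanSingleton_mul_spanSingleton, inv_mul_cancel₀ hx, spanSingleton_one, one_mul]

theorem le_spanSingleton_mul_inv_iff {x : K} (hx : x ≠ 0) {I J : FractionalIdeal D⁰ K}
    (hI : I ≠ 0) : J ≤ spanSingleton D⁰ x * I⁻¹ ↔ J * I ≤ spanSingleton D⁰ x := by
  rw [le_spanSingleton_mul_iff_inv_mul_le hx, le_inv_iff_mul_le hI, mul_assoc,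
    ← mul_one (spanSingleton D⁰ x), le_spanSingleton_mul_iff_inv_mul_le hx]

theorem mul_spanSingleton_mul_inv_le (I : FractionalIdeal D⁰ K) (x : K) :
    I * (spanSingleton D⁰ x * I⁻¹) ≤ spanSingleton D⁰ x :=
  calc I * (spanSingleton D⁰ x * I⁻¹) = spanSingleton D⁰ x * (I * I⁻¹) := by ring
    _ ≤ spanSingleton D⁰ x * 1 := by gcongr; exact mul_inv_le_one_s4 I
    _ = spanSingleton D⁰ x := mul_one _

theorem exists_coeIdeal_eq_spanSingleton_mul_inv {I : Ideal D} {a : D} (ha : a ∈ I) :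
    ∃ B : Ideal D, (B : FractionalIdeal D⁰ K) =
      spanSingleton D⁰ (algebraMap D K a) * (I : FractionalIdeal D⁰ K)⁻¹ := by
  refine le_one_iff_exists_coeIdeal.mp ((mul_le_mul_left ?_ _).trans (mul_inv_le_one_s4 _))
  exact spanSingleton_le_iff_mem.mpr (mem_coeIdeal_of_mem _ ha)

end FractionalIdeal

open FractionalIdeal

section VOperation

variable {D K : Type*} [CommRing D] [IsDomain D] [Field K] [Algebra D K] [IsFractionRing D K]

theorem le_vOp {I : FractionalIdeal D⁰ K} (hI : I ≠ 0) : I ≤ vOp I :=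
  (le_inv_iff_mul_le (inv_ne_zero' hI)).mpr (mul_inv_le_one_s4 I)

theorem inv_vOp {I : FractionalIdeal D⁰ K} (hI : I ≠ 0) : (vOp I)⁻¹ = I⁻¹ :=
  le_antisymm (inv_anti_mono hI (ne_bot_of_le_ne_bot hI (le_vOp hI)) (le_vOp hI))
    (le_vOp (inv_ne_zero' hI))

theorem vOp_mul_inv_le_one (I : FractionalIdeal D⁰ K) : vOp I * I⁻¹ ≤ 1 := by
  rw [mul_comm]
  exact mul_inv_le_one_s4 I⁻¹

end VOperation

namespace StarOperation

variable {D K : Type*} [CommRing D] [IsDomain D] [Field K] [Algebra D K] [IsFractionRing D K]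
variable (s : StarOperation D K)

theorem star_le_one {I : FractionalIdeal D⁰ K} (hI : I ≠ 0) (h : I ≤ 1) : s.star I ≤ 1 :=
  s.star_one ▸ s.star_mono I 1 hI one_ne_zero h

theorem star_spanSingleton {x : K} (hx : x ≠ 0) :
    s.star (spanSingleton D⁰ x) = spanSingleton D⁰ x := by
  simpa only [mul_one, s.star_one] using s.star_smul x hx 1 one_ne_zero

theorem mul_star_le_s4 {I J : FractionalIdeal D⁰ K} (hI : I ≠ 0) (hJ : J ≠ 0) :
    I * s.star J ≤ s.star (I * J) := by
  refine mul_le.mpr fun i hi j hj => ?_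
  rcases eq_or_ne i 0 with rfl | hi0
  · simpa only [zero_mul] using (s.star (I * J)).zero_mem
  have hspan : spanSingleton D⁰ i ≠ 0 := spanSingleton_ne_zero_iff.mpr hi0
  have hij : i * j ∈ s.star (spanSingleton D⁰ i * J) := by
    rw [s.star_smul i hi0 J hJ]
    exact mem_singleton_mul.mpr ⟨j, hj, rfl⟩
  refine s.star_mono _ _ (mul_ne_zero hspan hJ) (mul_ne_zero hI hJ) ?_ hij
  gcongr
  exact spanSingleton_le_iff_mem.mpr hi

theorem star_mul_le {I J : FractionalIdeal D⁰ K} (hI : I ≠ 0) (hJ : J ≠ 0) :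
    s.star I * J ≤ s.star (I * J) := by
  rw [mul_comm, mul_comm I]
  exact s.mul_star_le_s4 hJ hI

theorem star_vOp_mul_inv_eq_one {I H J : FractionalIdeal D⁰ K} {x : K} (hI : I ≠ 0)
    (hH : H ≠ 0) (hJ : J ≠ 0) (hx : x ≠ 0) (hHJ : s.star (H * J) = spanSingleton D⁰ x)
    (hIH : I ≤ s.star H) (hxJ : spanSingleton D⁰ x * I⁻¹ ≤ s.star J) :
    s.star (vOp I * I⁻¹) = 1 := by
  have hJle : J ≤ spanSingleton D⁰ x * I⁻¹ := by
    rw [le_spanSingleton_mul_inv_iff hx hI, ← hHJ, mul_comm]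
    exact (mul_le_mul_left hIH J).trans (s.star_mul_le hH hJ)
  have hHle : H ≤ vOp I := by
    rw [vOp, le_inv_iff_mul_le (inv_ne_zero' hI), ← (isUnit_spanSingleton hx).mul_le_mul_left,
      mul_one, mul_left_comm]
    refine (mul_le_mul_right hxJ H).trans ?_
    exact hHJ ▸ s.mul_star_le_s4 hH hJ
  have hlow : spanSingleton D⁰ x⁻¹ * (H * J) ≤ vOp I * I⁻¹ := by
    rw [← le_spanSingleton_mul_iff_inv_mul_le hx, mul_left_comm]
    exact mul_le_mul' hHle hJle
  have hstar_low : s.star (spanSingleton D⁰ x⁻¹ * (H * J)) = 1 := by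
    rw [s.star_smul _ (inv_ne_zero hx) _ (mul_ne_zero hH hJ), hHJ,
      spanSingleton_mul_spanSingleton, inv_mul_cancel₀ hx, spanSingleton_one]
  have hlow_ne : spanSingleton D⁰ x⁻¹ * (H * J) ≠ 0 :=
    mul_ne_zero (spanSingleton_ne_zero_iff.mpr (inv_ne_zero hx)) (mul_ne_zero hH hJ)
  have hprod_ne : vOp I * I⁻¹ ≠ 0 := ne_bot_of_le_ne_bot hlow_ne hlow
  refine le_antisymm (s.star_le_one hprod_ne (vOp_mul_inv_le_one I)) ?_
  exact hstar_low ▸ s.star_mono _ _ hlow_ne hprod_ne hlow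

end StarOperation

/-- Let `*` be a star operation on `D` such that `D` is `*`-sharp.
Then `I_v` is `*`-invertible for each nonzero ideal `I` of `D`. -/
theorem statement4 (D : Type*) [CommRing D] [IsDomain D]
    (K : Type*) [Field K] [Algebra D K] [IsFractionRing D K]
    (s : StarOperation D K) (hsharp : s.IsSharp) :
    ∀ I : Ideal D, I ≠ 0 →
      s.star (vOp (I : FractionalIdeal D⁰ K) * (vOp (I : FractionalIdeal D⁰ K))⁻¹) = 1 := by
  intro I hI
  have hI' : (I : FractionalIdeal D⁰ K) ≠ 0 := coeIdeal_ne_zero.mpr hI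
  obtain ⟨a, haI, ha0⟩ := Submodule.exists_mem_ne_zero_of_ne_bot hI
  have hx : algebraMap D K a ≠ 0 :=
    (map_ne_zero_iff (algebraMap D K) (IsFractionRing.injective D K)).mpr ha0
  have hspan : ((Ideal.span {a} : Ideal D) : FractionalIdeal D⁰ K) =
      spanSingleton D⁰ (algebraMap D K a) := coeIdeal_span_singleton a
  obtain ⟨B, hB⟩ := exists_coeIdeal_eq_spanSingleton_mul_inv (K := K) haI
  have hB0 : B ≠ 0 := coeIdeal_ne_zero.mp
    (hB ▸ mul_ne_zero (spanSingleton_ne_zero_iff.mpr hx) (inv_ne_zero' hI'))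
  have hIB : I * B ≤ Ideal.span {a} := by
    rw [← coeIdeal_le_coeIdeal K, coeIdeal_mul, hB, hspan]
    exact mul_spanSingleton_mul_inv_le _ _
  obtain ⟨H, J, hH, hJ, hHJ, hIH, hBJ⟩ :=
    hsharp _ I B (by simpa [Ideal.span_singleton_eq_bot]) hI hB0 hIB
  rw [inv_vOp hI']
  refine s.star_vOp_mul_inv_eq_one hI' (coeIdeal_ne_zero.mpr hH) (coeIdeal_ne_zero.mpr hJ) hx ?_
    hIH (hB ▸ hBJ)
  rw [← hHJ, hspan, s.star_spanSingleton hx]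
end
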